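/- arXiv:1711.11549 — 2 statements merged into one kernel-verified Lean document; each statement's English description precedes it below -/
import Mathlib

section
/- Let ‖·‖_X be a rearrangement-invariant function norm on (0,∞) and let 0 < m/n < 1 with ‖χ_{(0,1)}(s) s^{−1+m/n}‖_{X'(0,∞)} < ∞. Then for the norm Z defined by ‖g‖_{Z'(0,1)} = ‖s^{m/n} g**(s)‖_{X̃'(0,1)}, one has L¹(0,1) → Z'(0,1); equivalently, there is a constant C with ‖g‖_{Z'(0,1)} ≤ C ‖g‖_{L¹(0,1)} for all measurable g on (0,1). Combined with the converse embedding from property (P5), this yields Z(0,1) = L^∞(0,1) up to equivalent norms. -/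
open MeasureTheory Set
open scoped ENNReal NNReal

noncomputable section

/-- The non-increasing rearrangement of `f` with respect to the measure `μ`:
`f*(s) = inf { t : μ {x | f x > t} ≤ s }`. -/
def rearr {α : Type*} [MeasurableSpace α] (μ : Measure α) (f : α → ℝ≥0∞) (s : ℝ) : ℝ≥0∞ :=
  sInf {t : ℝ≥0∞ | μ {x | t < f x} ≤ ENNReal.ofReal s}
/-- A rearrangement-invariant function norm on `(0,∞)`, acting on nonnegative
(extended-real-valued) measurable functions; properties (P1)-(P6). -/
structure RINorm where
  N : (ℝ → ℝ≥0∞) → ℝ≥0∞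
  eq_zero_iff' : ∀ f : ℝ → ℝ≥0∞,
    N f = 0 ↔ ∀ᵐ s ∂(volume.restrict (Set.Ioi (0:ℝ))), f s = 0
  smul' : ∀ (c : ℝ≥0) (f : ℝ → ℝ≥0∞), N (fun s => (c : ℝ≥0∞) * f s) = (c : ℝ≥0∞) * N f
  add_le' : ∀ f g : ℝ → ℝ≥0∞, N (fun s => f s + g s) ≤ N f + N g
  mono' : ∀ f g : ℝ → ℝ≥0∞, (∀ s ∈ Set.Ioi (0:ℝ), f s ≤ g s) → N f ≤ N g
  sup' : ∀ f : ℕ → ℝ → ℝ≥0∞, (∀ k s, f k s ≤ f (k+1) s) →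
    N (fun s => ⨆ k, f k s) = ⨆ k, N (f k)
  chi_finite' : ∀ F : Set ℝ, MeasurableSet F → F ⊆ Set.Ioi 0 → volume F ≠ ⊤ →
    N (F.indicator 1) ≠ ⊤
  int_le' : ∀ F : Set ℝ, MeasurableSet F → F ⊆ Set.Ioi 0 → volume F ≠ ⊤ →
    ∃ C : ℝ≥0, ∀ f : ℝ → ℝ≥0∞, ∫⁻ s in F, f s ≤ (C : ℝ≥0∞) * N f
  rearr_inv' : ∀ f g : ℝ → ℝ≥0∞,
    (∀ t : ℝ≥0∞, volume {s : ℝ | 0 < s ∧ t < f s} = volume {s : ℝ | 0 < s ∧ t < g s}) →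
    N f = N g

/-- The associate norm of a rearrangement-invariant function norm. -/
def RINorm.assoc (X : RINorm) (g : ℝ → ℝ≥0∞) : ℝ≥0∞ :=
  ⨆ (f : ℝ → ℝ≥0∞) (_ : X.N f ≤ 1), ∫⁻ s in Set.Ioi (0:ℝ), f s * g s
/-- The localization `X̃(0,1)` of the norm `X`: the norm of the extension of `f` by zero. -/
def RINorm.loc (X : RINorm) (f : ℝ → ℝ≥0∞) : ℝ≥0∞ := X.N ((Set.Ioo (0:ℝ) 1).indicator f)

/-- The associate norm `X̃'(0,1)` of the localization over `(0,1)`. -/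
def RINorm.locAssoc (X : RINorm) (g : ℝ → ℝ≥0∞) : ℝ≥0∞ :=
  ⨆ (f : ℝ → ℝ≥0∞) (_ : X.loc f ≤ 1), ∫⁻ s in Set.Ioo (0:ℝ) 1, f s * g s

/-- The maximal function `f**(s) = (1/s) ∫₀ˢ f*(r) dr` of a function on `(0,1)`. -/
def maxf (f : ℝ → ℝ≥0∞) (s : ℝ) : ℝ≥0∞ :=
  (∫⁻ r in Set.Ioo (0:ℝ) s, rearr (volume.restrict (Set.Ioo (0:ℝ) 1)) f r) / ENNReal.ofReal s

/-- The function norm `Z'(0,1)` defined by `‖g‖_{Z'(0,1)} = ‖ s^{m/n} g**(s) ‖_{X̃'(0,1)}`. -/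
def Zassoc (X : RINorm) (m n : ℕ) (g : ℝ → ℝ≥0∞) : ℝ≥0∞ :=
  X.locAssoc (fun s => ENNReal.ofReal (s ^ ((m:ℝ)/(n:ℝ))) * maxf g s)

/-- The function norm `Z(0,1)`, namely the associate norm of `Z'(0,1)`. -/
def Znorm (X : RINorm) (m n : ℕ) (f : ℝ → ℝ≥0∞) : ℝ≥0∞ :=
  ⨆ (g : ℝ → ℝ≥0∞) (_ : Zassoc X m n g ≤ 1), ∫⁻ s in Set.Ioo (0:ℝ) 1, f s * g s

/-! The rearrangement `g*` is equimeasurable with `g`, so `∫₀^∞ g* = ‖g‖_{L¹(0,1)}` and hence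
`s^{m/n} g**(s) ≤ ‖g‖_{L¹(0,1)} · s^{m/n-1}`; the `X̃'(0,1)` norm of the right-hand side is at most
`‖g‖_{L¹(0,1)} ‖χ_{(0,1)}(s) s^{-1+m/n}‖_{X'(0,∞)}`, which is the embedding `L¹ → Z'`.
Conversely, `g*` is nonincreasing, so `g** ≥ ∫₀¹ g* ≥ ‖g‖_{L¹(0,1)}` on `(0,1)`, and testing
`X̃'(0,1)` against a constant gives `Z' → L¹`. Since `Z` is the associate space of `Z'`, these two
embeddings dualize to `Z = L^∞`. -/

lemma volume_setOf_ofReal_lt_inter_Ioi (c : ℝ≥0∞) :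
    volume ({t : ℝ | ENNReal.ofReal t < c} ∩ Ioi 0) = c := by
  rcases eq_or_ne c ∞ with rfl | hc
  · simp
  · have : {t : ℝ | ENNReal.ofReal t < c} ∩ Ioi 0 = Ioo 0 c.toReal := by
      ext t
      simp only [mem_inter_iff, mem_ofPred_eq, mem_Ioi, mem_Ioo]
      exact ⟨fun ⟨h, ht⟩ => ⟨ht, (ENNReal.ofReal_lt_iff_lt_toReal ht.le hc).1 h⟩,
        fun ⟨ht, h⟩ => ⟨(ENNReal.ofReal_lt_iff_lt_toReal ht.le hc).2 h, ht⟩⟩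
    rw [this, Real.volume_Ioo, sub_zero, ENNReal.ofReal_toReal hc]

section

variable {α : Type*} [MeasurableSpace α]

-- Mathlib's `lintegral_eq_lintegral_meas_lt` is the layer-cake formula for real-valued functions.
lemma lintegral_eq_lintegral_meas_ofReal_lt (μ : Measure α) [SFinite μ] {h : α → ℝ≥0∞}
    (hh : Measurable h) :
    ∫⁻ x, h x ∂μ = ∫⁻ t in Ioi (0:ℝ), μ {x | ENNReal.ofReal t < h x} := by
  set S : Set (ℝ × α) := {p | ENNReal.ofReal p.1 < h p.2}
  have hS : MeasurableSet S :=
    measurableSet_lt (ENNReal.measurable_ofReal.comp measurable_fst) (hh.comp measurable_snd)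
  calc ∫⁻ x, h x ∂μ = ∫⁻ x, (∫⁻ t in Ioi (0:ℝ), S.indicator 1 (t, x)) ∂μ := by
        refine lintegral_congr fun x => ?_
        have hx : MeasurableSet {t : ℝ | ENNReal.ofReal t < h x} :=
          ENNReal.measurable_ofReal measurableSet_Iio
        change _ = ∫⁻ t in Ioi (0:ℝ), {t : ℝ | ENNReal.ofReal t < h x}.indicator 1 t
        rw [lintegral_indicator_one hx, Measure.restrict_apply hx,
          volume_setOf_ofReal_lt_inter_Ioi]
    _ = ∫⁻ t in Ioi (0:ℝ), ∫⁻ x, S.indicator 1 (t, x) ∂μ :=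
        (lintegral_lintegral_swap (f := fun t x => S.indicator 1 (t, x))
          (measurable_one.indicator hS).aemeasurable).symm
    _ = ∫⁻ t in Ioi (0:ℝ), μ {x | ENNReal.ofReal t < h x} := by
        refine lintegral_congr fun t => ?_
        change ∫⁻ x, {x | ENNReal.ofReal t < h x}.indicator 1 x ∂μ = _
        exact lintegral_indicator_one (hh measurableSet_Ioi)

lemma rearr_antitone (μ : Measure α) (g : α → ℝ≥0∞) :
    Antitone (rearr μ g) := fun _ _ h =>
  sInf_le_sInf fun _ ht => ht.trans (ENNReal.ofReal_le_ofReal h)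

lemma rearr_mono (μ : Measure α) {g h : α → ℝ≥0∞} (hgh : g ≤ h) (r : ℝ) :
    rearr μ g r ≤ rearr μ h r :=
  sInf_le_sInf fun _ ht => (measure_mono fun _ hx => lt_of_lt_of_le hx (hgh _)).trans ht

lemma lt_rearr_iff (μ : Measure α) (g : α → ℝ≥0∞) (T : ℝ≥0∞) (r : ℝ) :
    T < rearr μ g r ↔ ENNReal.ofReal r < μ {x | T < g x} := by
  constructor
  · intro hT
    contrapose! hT
    exact sInf_le hT
  · intro hr
    have hT : T < ∞ := by
      by_contra! hT
      simp [top_le_iff.1 hT] at hr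
    -- continuity from below of `μ` along `{u k < g} ↑ {T < g}` for levels `u k ↓ T`
    obtain ⟨u, hu_anti, hu_mem, hu_lim⟩ := exists_seq_strictAnti_tendsto' hT
    have hunion : {x | T < g x} = ⋃ k, {x | u k < g x} := by
      ext x
      simp only [mem_ofPred_eq, mem_iUnion]
      refine ⟨fun hx => (hu_lim.eventually (gt_mem_nhds hx)).exists, ?_⟩
      rintro ⟨k, hk⟩
      exact (hu_mem k).1.trans hk
    have hmono : Monotone fun k => {x | u k < g x} :=
      fun k l hkl x hx => (hu_anti.antitone hkl).trans_lt hx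
    rw [hunion, hmono.measure_iUnion, lt_iSup_iff] at hr
    obtain ⟨k, hk⟩ := hr
    refine (hu_mem k).1.trans_le (le_sInf fun t ht => ?_)
    by_contra! htk
    exact ((measure_mono fun x hx => htk.trans hx).trans ht).not_gt hk

lemma rearr_eq_zero_of_measure_univ_le {μ : Measure α} (g : α → ℝ≥0∞) {r : ℝ}
    (hr : μ univ ≤ ENNReal.ofReal r) : rearr μ g r = 0 :=
  nonpos_iff_eq_zero.1 <| sInf_le <| (measure_mono (subset_univ _)).trans hr

lemma lintegral_rearr (μ : Measure α) [SFinite μ] {g : α → ℝ≥0∞} (hg : Measurable g) :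
    ∫⁻ r in Ioi (0:ℝ), rearr μ g r = ∫⁻ x, g x ∂μ := by
  have hG : Measurable (rearr μ g) := (rearr_antitone μ g).measurable
  rw [lintegral_eq_lintegral_meas_ofReal_lt _ hG, lintegral_eq_lintegral_meas_ofReal_lt μ hg]
  refine lintegral_congr fun t => ?_
  rw [Measure.restrict_apply' measurableSet_Ioi]
  simp_rw [lt_rearr_iff]
  exact volume_setOf_ofReal_lt_inter_Ioi _

lemma lintegral_le_lintegral_rearr (μ : Measure α) [SFinite μ] (g : α → ℝ≥0∞) :
    ∫⁻ x, g x ∂μ ≤ ∫⁻ r in Ioi (0:ℝ), rearr μ g r := by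
  obtain ⟨h, hh, hhg, hgh⟩ := exists_measurable_le_lintegral_eq μ g
  rw [hgh, ← lintegral_rearr μ hh]
  exact lintegral_mono fun r => rearr_mono μ hhg r

lemma setLIntegral_Ioi_rearr_eq_Ioo {μ : Measure α} (hμ : μ univ ≤ 1) (g : α → ℝ≥0∞) :
    ∫⁻ r in Ioi (0:ℝ), rearr μ g r = ∫⁻ r in Ioo (0:ℝ) 1, rearr μ g r := by
  have hvanish : ∫⁻ r in Ici (1:ℝ), rearr μ g r = 0 := by
    rw [setLIntegral_congr_fun measurableSet_Ici fun r hr =>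
      rearr_eq_zero_of_measure_univ_le g (hμ.trans (ENNReal.one_le_ofReal.2 hr)), lintegral_zero]
  rw [← Ioo_union_Ici_eq_Ioi zero_lt_one, lintegral_union measurableSet_Ici
    ((Iio_disjoint_Ici le_rfl).mono_left Ioo_subset_Iio_self), hvanish, add_zero]

lemma iSup_lintegral_mul_le_mul_essSup {μ : Measure α} {Φ : (α → ℝ≥0∞) → ℝ≥0∞} {K : ℝ≥0∞}
    (hK : K ≠ 0) (hΦ : ∀ g, ∫⁻ x, g x ∂μ ≤ K * Φ g) (f : α → ℝ≥0∞) :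
    ⨆ (g : α → ℝ≥0∞) (_ : Φ g ≤ 1), ∫⁻ x, f x * g x ∂μ ≤ K * essSup f μ := by
  rcases eq_or_ne (essSup f μ) ∞ with hf | hf
  · rw [hf, ENNReal.mul_top hK]
    exact le_top
  refine iSup₂_le fun g hg => ?_
  calc ∫⁻ x, f x * g x ∂μ ≤ ∫⁻ x, essSup f μ * g x ∂μ :=
        lintegral_mono_ae ((ENNReal.ae_le_essSup f).mono fun x hx => by gcongr)
    _ = essSup f μ * ∫⁻ x, g x ∂μ := lintegral_const_mul' _ _ hf
    _ ≤ essSup f μ * (K * 1) := by gcongr; exact (hΦ g).trans (by gcongr)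
    _ = K * essSup f μ := by rw [mul_one, mul_comm]

lemma essSup_le_mul_iSup_lintegral_mul {μ : Measure α} [IsFiniteMeasure μ]
    {Φ : (α → ℝ≥0∞) → ℝ≥0∞} {C : ℝ≥0∞} (hC0 : C ≠ 0) (hC : C ≠ ∞)
    (hΦ : ∀ g, Measurable g → Φ g ≤ C * ∫⁻ x, g x ∂μ) {f : α → ℝ≥0∞} (hf : Measurable f) :
    essSup f μ ≤ C * ⨆ (g : α → ℝ≥0∞) (_ : Φ g ≤ 1), ∫⁻ x, f x * g x ∂μ := by
  -- test against the indicator of `{a < f}`, normalized to have `L¹` norm `C⁻¹`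
  refine le_of_forall_lt_imp_le_of_dense fun a ha => ?_
  set E := {x | a < f x}
  have hE : MeasurableSet E := hf measurableSet_Ioi
  have hE0 : μ E ≠ 0 := fun h =>
    ha.not_ge (essSup_le_of_ae_le a (ae_iff.2 (by simpa only [not_le] using h)))
  set g := E.indicator fun _ => C⁻¹ * (μ E)⁻¹
  have hg : ∫⁻ x, g x ∂μ = C⁻¹ := by
    rw [lintegral_indicator_const hE, mul_assoc, ENNReal.inv_mul_cancel hE0 (measure_ne_top μ E),
      mul_one]
  have hΦg : Φ g ≤ 1 :=
    (hΦ g (measurable_const.indicator hE)).trans_eq (by rw [hg, ENNReal.mul_inv_cancel hC0 hC])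
  have hfg : a * C⁻¹ ≤ ∫⁻ x, f x * g x ∂μ := by
    calc a * C⁻¹ = ∫⁻ x, a * g x ∂μ := by
          rw [lintegral_const_mul _ (measurable_const.indicator hE), hg]
      _ ≤ ∫⁻ x, f x * g x ∂μ := lintegral_mono fun x => by
          by_cases hx : x ∈ E
          · exact mul_le_mul_left hx.le _
          · simp [g, hx]
  calc a = C * (a * C⁻¹) := by
        rw [mul_comm a, ← mul_assoc, ENNReal.mul_inv_cancel hC0 hC, one_mul]
    _ ≤ C * ⨆ (g : α → ℝ≥0∞) (_ : Φ g ≤ 1), ∫⁻ x, f x * g x ∂μ := by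
        gcongr
        exact le_iSup₂_of_le (f := fun g (_ : Φ g ≤ 1) => ∫⁻ x, f x * g x ∂μ) g hΦg hfg

end

lemma Antitone.ofReal_mul_setLIntegral_Ioo_le {G : ℝ → ℝ≥0∞} (hG : Antitone G) {s : ℝ}
    (hs0 : 0 < s) (hs1 : s ≤ 1) :
    ENNReal.ofReal s * ∫⁻ r in Ioo 0 1, G r ≤ ∫⁻ r in Ioo 0 s, G r := by
  set I := ∫⁻ r in Ioo 0 s, G r
  have hsplit : ∫⁻ r in Ioo 0 1, G r = I + ∫⁻ r in Ico s 1, G r := by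
    rw [← Ioo_union_Ico_eq_Ioo hs0 hs1, lintegral_union measurableSet_Ico
      ((Iio_disjoint_Ici le_rfl).mono Ioo_subset_Iio_self Ico_subset_Ici_self)]
  have htail : ∫⁻ r in Ico s 1, G r ≤ ENNReal.ofReal (1 - s) * G s := by
    calc ∫⁻ r in Ico s 1, G r ≤ ∫⁻ _ in Ico s 1, G s :=
          setLIntegral_mono measurable_const fun r hr => hG hr.1
      _ = ENNReal.ofReal (1 - s) * G s := by rw [setLIntegral_const, Real.volume_Ico, mul_comm]
  have hhead : ENNReal.ofReal s * G s ≤ I := by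
    calc ENNReal.ofReal s * G s = ∫⁻ _ in Ioo 0 s, G s := by
          rw [setLIntegral_const, Real.volume_Ioo, sub_zero, mul_comm]
      _ ≤ I := setLIntegral_mono' measurableSet_Ioo fun r hr => hG hr.2.le
  calc ENNReal.ofReal s * ∫⁻ r in Ioo 0 1, G r
      ≤ ENNReal.ofReal s * I + ENNReal.ofReal (1 - s) * (ENNReal.ofReal s * G s) := by
        rw [hsplit, mul_add, mul_left_comm]
        gcongr
    _ ≤ ENNReal.ofReal s * I + ENNReal.ofReal (1 - s) * I := by gcongr
    _ = I := by
        rw [← add_mul, ← ENNReal.ofReal_add hs0.le (by linarith), add_sub_cancel,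
          ENNReal.ofReal_one, one_mul]

lemma maxf_le_setLIntegral_div {g : ℝ → ℝ≥0∞} (hg : Measurable g) (s : ℝ) :
    maxf g s ≤ (∫⁻ x in Ioo 0 1, g x) / ENNReal.ofReal s :=
  ENNReal.div_le_div_right ((lintegral_mono_set Ioo_subset_Ioi_self).trans_eq
    (lintegral_rearr _ hg)) _

lemma setLIntegral_rearr_le_maxf (g : ℝ → ℝ≥0∞) {s : ℝ} (hs : s ∈ Ioo (0:ℝ) 1) :
    ∫⁻ r in Ioo 0 1, rearr (volume.restrict (Ioo (0:ℝ) 1)) g r ≤ maxf g s := by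
  rw [maxf, ENNReal.le_div_iff_mul_le (Or.inl (by simpa using hs.1))
    (Or.inl ENNReal.ofReal_ne_top), mul_comm]
  exact (rearr_antitone _ g).ofReal_mul_setLIntegral_Ioo_le hs.1 hs.2.le

lemma setLIntegral_le_four_mul_setLIntegral_rpow_mul_maxf (g : ℝ → ℝ≥0∞) {p : ℝ} (hp : p ≤ 1) :
    ∫⁻ s in Ioo 0 1, g s ≤ 4 * ∫⁻ s in Ioo 0 1, ENNReal.ofReal (s ^ p) * maxf g s := by
  set J := ∫⁻ r in Ioo 0 1, rearr (volume.restrict (Ioo (0:ℝ) 1)) g r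
  have hgJ : ∫⁻ s in Ioo 0 1, g s ≤ J :=
    (lintegral_le_lintegral_rearr _ g).trans_eq
      (setLIntegral_Ioi_rearr_eq_Ioo (by simp [Real.volume_Ioo]) g)
  have hhalf : ENNReal.ofReal (1 - 1 / 2) = 2⁻¹ := by
    rw [show (1:ℝ) - 1 / 2 = 2⁻¹ by norm_num, ENNReal.ofReal_inv_of_pos two_pos,
      ENNReal.ofReal_ofNat]
  have hpt : ∀ s ∈ Ioo (1 / 2 : ℝ) 1, 2⁻¹ * J ≤ ENNReal.ofReal (s ^ p) * maxf g s := by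
    intro s hs
    have hs0 : 0 < s := by linarith [hs.1]
    have hs_le : s ≤ s ^ p := by
      simpa using Real.rpow_le_rpow_of_exponent_ge hs0 hs.2.le hp
    gcongr
    · rw [← hhalf]
      exact ENNReal.ofReal_le_ofReal (by linarith [hs.1])
    · exact setLIntegral_rearr_le_maxf g ⟨hs0, hs.2⟩
  calc ∫⁻ s in Ioo 0 1, g s ≤ 4 * (2⁻¹ * J * 2⁻¹) := by
        rw [show (4:ℝ≥0∞) * (2⁻¹ * J * 2⁻¹) = (2 * 2⁻¹) * (2 * 2⁻¹) * J by ring,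
          ENNReal.mul_inv_cancel two_ne_zero ENNReal.ofNat_ne_top, one_mul, one_mul]
        exact hgJ
    _ = 4 * ∫⁻ _ in Ioo (1 / 2 : ℝ) 1, 2⁻¹ * J := by
        rw [setLIntegral_const, Real.volume_Ioo, hhalf]
    _ ≤ 4 * ∫⁻ s in Ioo (1 / 2 : ℝ) 1, ENNReal.ofReal (s ^ p) * maxf g s := by
        gcongr 1
        exact setLIntegral_mono' measurableSet_Ioo hpt
    _ ≤ 4 * ∫⁻ s in Ioo 0 1, ENNReal.ofReal (s ^ p) * maxf g s := by
        gcongr 1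
        exact lintegral_mono_set (Ioo_subset_Ioo_left (by norm_num))

namespace RINorm

variable (X : RINorm)

lemma locAssoc_mono {w₁ w₂ : ℝ → ℝ≥0∞} (h : ∀ s ∈ Ioo (0:ℝ) 1, w₁ s ≤ w₂ s) :
    X.locAssoc w₁ ≤ X.locAssoc w₂ :=
  iSup₂_mono fun _ _ => setLIntegral_mono' measurableSet_Ioo fun s hs => by gcongr; exact h s hs

lemma locAssoc_const_mul_le {c : ℝ≥0∞} (hc : c ≠ ∞) (w : ℝ → ℝ≥0∞) :
    X.locAssoc (fun s => c * w s) ≤ c * X.locAssoc w := by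
  simp only [locAssoc, ENNReal.mul_iSup]
  refine iSup₂_mono fun f _ => le_of_eq ?_
  rw [← lintegral_const_mul' c _ hc]
  exact lintegral_congr fun s => mul_left_comm _ _ _

lemma locAssoc_le_assoc_indicator (w : ℝ → ℝ≥0∞) :
    X.locAssoc w ≤ X.assoc ((Ioo (0:ℝ) 1).indicator w) := by
  refine iSup₂_le fun f hf => le_iSup₂_of_le ((Ioo (0:ℝ) 1).indicator f) hf (le_of_eq ?_)
  have hfw : (fun s => (Ioo (0:ℝ) 1).indicator f s * (Ioo (0:ℝ) 1).indicator w s)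
      = (Ioo (0:ℝ) 1).indicator fun s => f s * w s := by
    ext s
    by_cases hs : s ∈ Ioo (0:ℝ) 1 <;> simp [hs]
  rw [hfw, lintegral_indicator measurableSet_Ioo, Measure.restrict_restrict measurableSet_Ioo,
    inter_eq_self_of_subset_left Ioo_subset_Ioi_self]

lemma N_indicator_Ioo_ne_zero : X.N ((Ioo (0:ℝ) 1).indicator 1) ≠ 0 := by
  rw [Ne, X.eq_zero_iff', ae_restrict_iff' measurableSet_Ioi]
  intro h
  have : ∀ᵐ s, s ∉ Ioo (0:ℝ) 1 := h.mono fun s hs hs' => by simpa [hs'] using hs hs'.1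
  rw [← measure_eq_zero_iff_ae_notMem, Real.volume_Ioo] at this
  simp at this

lemma N_indicator_Ioo_ne_top : X.N ((Ioo (0:ℝ) 1).indicator 1) ≠ ∞ :=
  X.chi_finite' _ measurableSet_Ioo (fun _ hs => hs.1) (by simp [Real.volume_Ioo])

lemma setLIntegral_le_mul_locAssoc (w : ℝ → ℝ≥0∞) :
    ∫⁻ s in Ioo 0 1, w s ≤ X.N ((Ioo (0:ℝ) 1).indicator 1) * X.locAssoc w := by
  set B := X.N ((Ioo (0:ℝ) 1).indicator 1)
  set c : ℝ≥0 := B.toNNReal⁻¹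
  have hB0 : B ≠ 0 := X.N_indicator_Ioo_ne_zero
  have hBtop : B ≠ ∞ := X.N_indicator_Ioo_ne_top
  have hcB : B * c = 1 := by
    rw [← ENNReal.coe_toNNReal hBtop, ← ENNReal.coe_mul,
      mul_inv_cancel₀ (by simp [ENNReal.toNNReal_eq_zero_iff, hB0, hBtop]), ENNReal.coe_one]
  have hloc : X.loc (fun _ => (c : ℝ≥0∞)) ≤ 1 := by
    have : (Ioo (0:ℝ) 1).indicator (fun _ => (c : ℝ≥0∞))
        = fun s => (c : ℝ≥0∞) * (Ioo (0:ℝ) 1).indicator 1 s := by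
      ext s
      by_cases hs : s ∈ Ioo (0:ℝ) 1 <;> simp [hs]
    rw [loc, this, X.smul', mul_comm, hcB]
  calc ∫⁻ s in Ioo 0 1, w s = B * ∫⁻ s in Ioo 0 1, (c : ℝ≥0∞) * w s := by
        rw [lintegral_const_mul' _ _ ENNReal.coe_ne_top, ← mul_assoc, hcB, one_mul]
    _ ≤ B * X.locAssoc w := by
        gcongr
        exact le_iSup₂ (f := fun f (_ : X.loc f ≤ 1) => ∫⁻ s in Ioo 0 1, f s * w s) _ hloc

end RINorm

lemma Zassoc_le_mul_setLIntegral (X : RINorm) (m n : ℕ) {C : ℝ≥0∞}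
    (hC : X.assoc ((Ioo (0:ℝ) 1).indicator fun s => ENNReal.ofReal (s ^ ((m:ℝ) / n - 1))) ≤ C)
    (hC0 : C ≠ 0) {g : ℝ → ℝ≥0∞} (hg : Measurable g) :
    Zassoc X m n g ≤ C * ∫⁻ s in Ioo 0 1, g s := by
  set I := ∫⁻ s in Ioo 0 1, g s
  rcases eq_or_ne I ∞ with hI | hI
  · rw [hI, ENNReal.mul_top hC0]
    exact le_top
  have hpt : ∀ s ∈ Ioo (0:ℝ) 1, ENNReal.ofReal (s ^ ((m:ℝ) / n)) * maxf g s
      ≤ I * ENNReal.ofReal (s ^ ((m:ℝ) / n - 1)) := by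
    intro s hs
    calc ENNReal.ofReal (s ^ ((m:ℝ) / n)) * maxf g s
        ≤ ENNReal.ofReal (s ^ ((m:ℝ) / n)) * (I / ENNReal.ofReal s) := by
          gcongr
          exact maxf_le_setLIntegral_div hg s
      _ = I * ENNReal.ofReal (s ^ ((m:ℝ) / n - 1)) := by
          rw [Real.rpow_sub_one hs.1.ne', ENNReal.ofReal_div_of_pos hs.1]
          simp only [div_eq_mul_inv]
          ring
  calc Zassoc X m n g ≤ X.locAssoc fun s => I * ENNReal.ofReal (s ^ ((m:ℝ) / n - 1)) :=
        X.locAssoc_mono hpt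
    _ ≤ I * X.locAssoc fun s => ENNReal.ofReal (s ^ ((m:ℝ) / n - 1)) :=
        X.locAssoc_const_mul_le hI _
    _ ≤ C * I := by
        rw [mul_comm]
        gcongr
        exact (X.locAssoc_le_assoc_indicator _).trans hC

lemma setLIntegral_le_mul_Zassoc (X : RINorm) {m n : ℕ} (hmn : m ≤ n) (g : ℝ → ℝ≥0∞) :
    ∫⁻ s in Ioo 0 1, g s ≤ 4 * X.N ((Ioo (0:ℝ) 1).indicator 1) * Zassoc X m n g := by
  have hp : (m:ℝ) / n ≤ 1 := div_le_one_of_le₀ (by exact_mod_cast hmn) n.cast_nonneg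
  calc ∫⁻ s in Ioo 0 1, g s
      ≤ 4 * ∫⁻ s in Ioo 0 1, ENNReal.ofReal (s ^ ((m:ℝ) / n)) * maxf g s :=
        setLIntegral_le_four_mul_setLIntegral_rpow_mul_maxf g hp
    _ ≤ 4 * (X.N ((Ioo (0:ℝ) 1).indicator 1) * Zassoc X m n g) := by
        gcongr
        exact X.setLIntegral_le_mul_locAssoc _
    _ = 4 * X.N ((Ioo (0:ℝ) 1).indicator 1) * Zassoc X m n g := (mul_assoc _ _ _).symm

theorem Z_equals_linfty_of_weight_in_assoc_general (X : RINorm) (m n : ℕ)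
    (hmn : m < n)
    (hconv : X.assoc ((Set.Ioo (0:ℝ) 1).indicator
        (fun s => ENNReal.ofReal (s ^ ((m:ℝ)/(n:ℝ) - 1)))) ≠ ⊤) :
    (∃ C : ℝ≥0, ∀ g : ℝ → ℝ≥0∞, Measurable g →
      Zassoc X m n g ≤ (C : ℝ≥0∞) * ∫⁻ s in Set.Ioo (0:ℝ) 1, g s) ∧
    (∃ C₁ C₂ : ℝ≥0, ∀ f : ℝ → ℝ≥0∞, Measurable f →
      Znorm X m n f ≤ (C₁ : ℝ≥0∞) * essSup f (volume.restrict (Set.Ioo (0:ℝ) 1)) ∧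
      essSup f (volume.restrict (Set.Ioo (0:ℝ) 1)) ≤ (C₂ : ℝ≥0∞) * Znorm X m n f) := by
  set C : ℝ≥0 := (X.assoc ((Ioo (0:ℝ) 1).indicator
    fun s => ENNReal.ofReal (s ^ ((m:ℝ) / n - 1)))).toNNReal + 1
  have hC0 : (C : ℝ≥0∞) ≠ 0 := by simp [C]
  have hL1 : ∀ g : ℝ → ℝ≥0∞, Measurable g →
      Zassoc X m n g ≤ (C : ℝ≥0∞) * ∫⁻ s in Ioo (0:ℝ) 1, g s := fun g hg =>
    Zassoc_le_mul_setLIntegral X m n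
      (by rw [ENNReal.coe_add, ENNReal.coe_toNNReal hconv]; exact le_self_add) hC0 hg
  set K := 4 * X.N ((Ioo (0:ℝ) 1).indicator 1)
  have hK0 : K ≠ 0 := mul_ne_zero four_ne_zero X.N_indicator_Ioo_ne_zero
  have hK : K ≠ ∞ := ENNReal.mul_ne_top ENNReal.ofNat_ne_top X.N_indicator_Ioo_ne_top
  refine ⟨⟨C, hL1⟩, K.toNNReal, C, fun f hf =>
    ⟨?_, essSup_le_mul_iSup_lintegral_mul hC0 ENNReal.coe_ne_top hL1 hf⟩⟩
  rw [ENNReal.coe_toNNReal hK]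
  exact iSup_lintegral_mul_le_mul_essSup hK0 (setLIntegral_le_mul_Zassoc X hmn.le) f

/-- If `‖χ_{(0,1)}(s) s^{−1+m/n}‖_{X'(0,∞)} < ∞`, then
`L¹(0,1) → Z'(0,1)`, and consequently `Z(0,1) = L^∞(0,1)` up to equivalent norms. -/
theorem Z_equals_linfty_of_weight_in_assoc (X : RINorm) (m n : ℕ)
    (hm : 0 < m) (hmn : m < n)
    (hconv : X.assoc ((Set.Ioo (0:ℝ) 1).indicator
        (fun s => ENNReal.ofReal (s ^ ((m:ℝ)/(n:ℝ) - 1)))) ≠ ⊤) :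
    (∃ C : ℝ≥0, ∀ g : ℝ → ℝ≥0∞, Measurable g →
      Zassoc X m n g ≤ (C : ℝ≥0∞) * ∫⁻ s in Set.Ioo (0:ℝ) 1, g s) ∧
    (∃ C₁ C₂ : ℝ≥0, ∀ f : ℝ → ℝ≥0∞, Measurable f →
      Znorm X m n f ≤ (C₁ : ℝ≥0∞) * essSup f (volume.restrict (Set.Ioo (0:ℝ) 1)) ∧
      essSup f (volume.restrict (Set.Ioo (0:ℝ) 1)) ≤ (C₂ : ℝ≥0∞) * Znorm X m n f) :=
  Z_equals_linfty_of_weight_in_assoc_general X m n hmn hconv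
end
end

section
/- Let A, B be Young functions such that A dominates B near zero (B(t) ≤ A(ct) for 0 ≤ t ≤ t₀). Then there is a constant C such that for every non-increasing f : (0,∞) → [0,∞), ‖f‖_{L^B(1,∞)} ≤ C ‖f‖_{L^A(0,∞)}. -/
/-!
For an admissible `λ` in `‖f‖_{L^A(0,∞)}` and `s > 1`, monotonicity of `f` gives
`A(f(s)/λ) ≤ ∫_0^1 A(f/λ) ≤ 1`; since `A` is convex and not identically zero, this confines
`f(s)/λ` to a bounded interval `[0, M]`. For `C ≥ max(c, M/t₀)` the values `f(s)/(Cλ)` then lie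
in `[0, t₀]`, where `B(x) ≤ A(cx) ≤ A(Cx)`, so `Cλ` is admissible in `‖f‖_{L^B(1,∞)}`.
-/

open MeasureTheory Set
open scoped ENNReal NNReal

noncomputable section

/-- A Young function: convex, non-decreasing, left-continuous, vanishing at `0`,
not identically `0` nor identically `∞` on `(0,∞)`. -/
structure YoungFunction where
  toFun : ℝ≥0∞ → ℝ≥0∞
  zero' : toFun 0 = 0
  mono' : Monotone toFun
  convex' : ∀ (a b : ℝ≥0∞) (θ : ℝ), 0 ≤ θ → θ ≤ 1 →
    toFun (ENNReal.ofReal θ * a + ENNReal.ofReal (1 - θ) * b) ≤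
      ENNReal.ofReal θ * toFun a + ENNReal.ofReal (1 - θ) * toFun b
  leftCont' : ∀ t : ℝ≥0∞, t ≠ 0 → toFun t = ⨆ s : {s : ℝ≥0∞ // s < t}, toFun s.1
  nontrivial_ne_zero' : ∃ t : ℝ≥0∞, 0 < t ∧ t ≠ ⊤ ∧ toFun t ≠ 0
  nontrivial_ne_top' : ∃ t : ℝ≥0∞, 0 < t ∧ toFun t ≠ ⊤

/-- The Luxemburg norm of `h : ℝ → ℝ≥0∞` over the set `I ⊆ ℝ` associated with
the Young function `A`. -/
def luxNorm (A : YoungFunction) (I : Set ℝ) (h : ℝ → ℝ≥0∞) : ℝ≥0∞ :=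
  sInf {l : ℝ≥0∞ | 0 < l ∧ ∫⁻ s in I, A.toFun (h s / l) ≤ 1}

namespace YoungFunction

variable (A : YoungFunction)

lemma toFun_ofReal_mul_le {θ : ℝ} (hθ₀ : 0 ≤ θ) (hθ₁ : θ ≤ 1) (x : ℝ≥0∞) :
    A.toFun (ENNReal.ofReal θ * x) ≤ ENNReal.ofReal θ * A.toFun x := by
  simpa only [mul_zero, add_zero, A.zero'] using A.convex' x 0 θ hθ₀ hθ₁

/-- `t ↦ A t / t` is non-decreasing. -/
lemma mul_toFun_le_mul_toFun {t x : ℝ≥0∞} (htx : t ≤ x) (hx : x ≠ ⊤) :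
    x * A.toFun t ≤ t * A.toFun x := by
  rcases eq_or_ne x 0 with rfl | hx₀
  · simp [nonpos_iff_eq_zero.1 htx]
  set θ : ℝ := t.toReal / x.toReal
  have hxR : 0 < x.toReal := ENNReal.toReal_pos hx₀ hx
  have hθx : ENNReal.ofReal θ * x = t := by
    rw [← ENNReal.ofReal_toReal hx, ← ENNReal.ofReal_mul (by positivity),
      div_mul_cancel₀ _ hxR.ne', ENNReal.ofReal_toReal (ne_top_of_le_ne_top hx htx)]
  have hθ₁ : θ ≤ 1 := div_le_one_of_le₀ (ENNReal.toReal_mono hx htx) hxR.le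
  calc x * A.toFun t = x * A.toFun (ENNReal.ofReal θ * x) := by rw [hθx]
    _ ≤ x * (ENNReal.ofReal θ * A.toFun x) := by
      gcongr; exact A.toFun_ofReal_mul_le (by positivity) hθ₁ x
    _ = t * A.toFun x := by rw [← hθx]; ring

lemma exists_le_of_toFun_le_one :
    ∃ M : ℝ≥0, ∀ x : ℝ≥0∞, x ≠ ⊤ → A.toFun x ≤ 1 → x ≤ M := by
  obtain ⟨t, -, ht, hAt⟩ := A.nontrivial_ne_zero'
  have hM : max t (t / A.toFun t) ≠ ⊤ := by simp [ht, ENNReal.div_eq_top, hAt]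
  refine ⟨(max t (t / A.toFun t)).toNNReal, fun x hx hAx => ?_⟩
  rw [ENNReal.coe_toNNReal hM]
  rcases le_total x t with hxt | htx
  · exact le_max_of_le_left hxt
  · refine le_max_of_le_right ((ENNReal.le_div_iff_mul_le (Or.inl hAt) (Or.inr ht)).2 ?_)
    calc x * A.toFun t ≤ t * A.toFun x := A.mul_toFun_le_mul_toFun htx hx
      _ ≤ t := mul_le_of_le_one_right' hAx

end YoungFunction

lemma ofReal_mul_le_setLIntegral_Ioc_of_antitoneOn {g : ℝ → ℝ≥0∞} {a b : ℝ} (hab : a < b)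
    (hg : AntitoneOn g (Ioc a b)) :
    ENNReal.ofReal (b - a) * g b ≤ ∫⁻ u in Ioc a b, g u := by
  calc ENNReal.ofReal (b - a) * g b = ∫⁻ _ in Ioc a b, g b := by
        rw [setLIntegral_const, Real.volume_Ioc, mul_comm]
    _ ≤ ∫⁻ u in Ioc a b, g u :=
        setLIntegral_mono' measurableSet_Ioc fun u hu => hg hu (right_mem_Ioc.2 hab) hu.2

lemma le_setLIntegral_Ioi_zero_of_antitoneOn {g : ℝ → ℝ≥0∞} (hg : AntitoneOn g (Ioi 0))
    {s : ℝ} (hs : 1 ≤ s) : g s ≤ ∫⁻ u in Ioi 0, g u := by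
  calc g s ≤ g 1 := hg (mem_Ioi.2 one_pos) (mem_Ioi.2 (one_pos.trans_le hs)) hs
    _ = ENNReal.ofReal (1 - 0) * g 1 := by simp
    _ ≤ ∫⁻ u in Ioc 0 1, g u :=
        ofReal_mul_le_setLIntegral_Ioc_of_antitoneOn one_pos (hg.mono Ioc_subset_Ioi_self)
    _ ≤ ∫⁻ u in Ioi 0, g u := lintegral_mono_set Ioc_subset_Ioi_self

lemma ENNReal.div_mul_eq_div_div {a b c : ℝ≥0∞} (hb₀ : b ≠ 0) (hb : b ≠ ⊤) :
    a / (b * c) = a / c / b := by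
  rw [div_eq_mul_inv, ENNReal.mul_inv (Or.inl hb₀) (Or.inl hb), mul_comm b⁻¹, ← mul_assoc,
    ← div_eq_mul_inv, ← div_eq_mul_inv]

lemma luxNorm_le_mul_of_forall {A B : YoungFunction} {I J : Set ℝ} {h : ℝ → ℝ≥0∞} {C : ℝ≥0∞}
    (hC₀ : C ≠ 0) (hC : C ≠ ⊤)
    (H : ∀ l, 0 < l → ∫⁻ s in I, A.toFun (h s / l) ≤ 1 →
      ∫⁻ s in J, B.toFun (h s / (C * l)) ≤ 1) :
    luxNorm B J h ≤ C * luxNorm A I h := by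
  calc luxNorm B J h ≤ ⨅ l ∈ {l | 0 < l ∧ ∫⁻ s in I, A.toFun (h s / l) ≤ 1}, C * l :=
        le_iInf₂ fun l hl => sInf_le ⟨ENNReal.mul_pos hC₀ hl.1.ne', H l hl.1 hl.2⟩
    _ = C * luxNorm A I h := by
        simp only [luxNorm, sInf_eq_iInf, ENNReal.mul_iInf_of_ne hC₀ hC]

lemma YoungFunction.toFun_div_le_of_dominates {A B : YoungFunction} {c t₀ : ℝ} (ht₀ : 0 ≤ t₀)
    (hdom : ∀ t : ℝ, 0 ≤ t → t ≤ t₀ →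
      B.toFun (ENNReal.ofReal t) ≤ A.toFun (ENNReal.ofReal (c * t)))
    {C x : ℝ≥0∞} (hC₀ : C ≠ 0) (hC : C ≠ ⊤) (hcC : ENNReal.ofReal c ≤ C)
    (hx : x ≤ C * ENNReal.ofReal t₀) :
    B.toFun (x / C) ≤ A.toFun x := by
  have hy : x / C ≤ ENNReal.ofReal t₀ := ENNReal.div_le_of_le_mul' hx
  have hy_top : x / C ≠ ⊤ := ne_top_of_le_ne_top ENNReal.ofReal_ne_top hy
  calc B.toFun (x / C) = B.toFun (ENNReal.ofReal (x / C).toReal) := by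
        rw [ENNReal.ofReal_toReal hy_top]
    _ ≤ A.toFun (ENNReal.ofReal (c * (x / C).toReal)) :=
        hdom _ ENNReal.toReal_nonneg (ENNReal.toReal_le_of_le_ofReal ht₀ hy)
    _ = A.toFun (ENNReal.ofReal c * (x / C)) := by
        rw [ENNReal.ofReal_mul' ENNReal.toReal_nonneg, ENNReal.ofReal_toReal hy_top]
    _ ≤ A.toFun (C * (x / C)) := A.mono' (by gcongr)
    _ = A.toFun x := by rw [ENNReal.mul_div_cancel hC₀ hC]

/-- If `A` dominates `B` near zero (`B(t) ≤ A(ct)` for `0 ≤ t ≤ t₀`),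
then there is a constant `C` such that `‖f‖_{L^B(1,∞)} ≤ C ‖f‖_{L^A(0,∞)}` for every
non-increasing `f : (0,∞) → [0,∞)`. -/
theorem tail_inequality_of_domination_near_zero (A B : YoungFunction) (c t₀ : ℝ)
    (hc : 0 < c) (ht₀ : 0 < t₀)
    (hdom : ∀ t : ℝ, 0 ≤ t → t ≤ t₀ →
      B.toFun (ENNReal.ofReal t) ≤ A.toFun (ENNReal.ofReal (c * t))) :
    ∃ C : ℝ≥0, ∀ f : ℝ → ℝ, (∀ s ∈ Set.Ioi (0:ℝ), 0 ≤ f s) → AntitoneOn f (Set.Ioi 0) →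
      luxNorm B (Set.Ioi 1) (fun s => ENNReal.ofReal (f s)) ≤
        (C : ℝ≥0∞) * luxNorm A (Set.Ioi 0) (fun s => ENNReal.ofReal (f s)) := by
  obtain ⟨M, hM⟩ := A.exists_le_of_toFun_le_one
  set C : ℝ≥0 := max c.toNNReal (M / t₀.toNNReal)
  have hC₀ : (C : ℝ≥0∞) ≠ 0 :=
    ENNReal.coe_ne_zero.2 (lt_max_of_lt_left (Real.toNNReal_pos.2 hc)).ne'
  have hMC : (M : ℝ≥0∞) ≤ C * ENNReal.ofReal t₀ := by
    rw [ENNReal.ofReal, ← ENNReal.coe_mul, ENNReal.coe_le_coe]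
    exact (div_le_iff₀ (Real.toNNReal_pos.2 ht₀)).1 (le_max_right _ _)
  refine ⟨C, fun f _ hf => luxNorm_le_mul_of_forall hC₀ ENNReal.coe_ne_top fun l hl hA => ?_⟩
  have hA_le_one : ∀ s ∈ Ioi (1 : ℝ), A.toFun (ENNReal.ofReal (f s) / l) ≤ 1 := fun s hs =>
    (le_setLIntegral_Ioi_zero_of_antitoneOn (fun u hu v hv huv =>
      A.mono' (ENNReal.div_le_div_right (ENNReal.ofReal_le_ofReal (hf hu hv huv)) l))
      hs.le).trans hA
  calc ∫⁻ s in Ioi 1, B.toFun (ENNReal.ofReal (f s) / (C * l))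
      ≤ ∫⁻ s in Ioi 1, A.toFun (ENNReal.ofReal (f s) / l) :=
        setLIntegral_mono' measurableSet_Ioi fun s hs => by
          rw [ENNReal.div_mul_eq_div_div hC₀ ENNReal.coe_ne_top]
          exact YoungFunction.toFun_div_le_of_dominates ht₀.le hdom hC₀ ENNReal.coe_ne_top
            (ENNReal.coe_le_coe.2 (le_max_left _ _))
            ((hM _ (ENNReal.div_ne_top ENNReal.ofReal_ne_top hl.ne') (hA_le_one s hs)).trans hMC)
    _ ≤ ∫⁻ s in Ioi 0, A.toFun (ENNReal.ofReal (f s) / l) :=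
        lintegral_mono_set (Ioi_subset_Ioi zero_le_one)
    _ ≤ 1 := hA
end
end
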